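/- Let $c \in [1,\infty)$, $d, K \in \mathbb{N}$, and let $(C_{n,m})_{n \in \mathbb{Z}, m \in \mathbb{N}} \subseteq [0,\infty)$ satisfy $C_{n,m} = 0$ for $n \le 0$ and, for all $n, m \in \mathbb{N}$, $C_{n,m} \le 2 c d^{c} K m^n + \sum_{\ell=0}^{n-1} m^{\,n-\ell}\big(3 c d^{c} K + C_{\ell,m} + C_{\ell-1,m}\big)$. Then for all $n, m \in \mathbb{N}$ one has $C_{n,m} \le 3 c d^{c} K (3m)^n$. -/

import Mathlib

open Finset

lemma stmt_12_aux (n : ℕ) (hn : 1 ≤ n) : 3 * n ≤ 3 ^ n := by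
  obtain ⟨k, rfl⟩ := Nat.exists_eq_add_of_le hn
  have hk : k < 3 ^ k := Nat.lt_pow_self (by norm_num)
  calc 3 * (1 + k) ≤ 3 * 3 ^ k := by omega
    _ = 3 ^ (1 + k) := by rw [pow_add]; ring

/-- Complexity recursion for MLP approximations: C_{n,m} ≤ 3cd^cK(3m)^n. -/
theorem stmt_12 (c : ℝ) (hc : 1 ≤ c) (d K : ℕ) (C : ℤ → ℕ → ℝ)
    (hpos : ∀ n m, 0 ≤ C n m)
    (hzero : ∀ n : ℤ, n ≤ 0 → ∀ m, C n m = 0)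
    (hrec : ∀ n m : ℕ, 1 ≤ n → 1 ≤ m →
      C n m ≤ 2 * c * (d : ℝ) ^ c * K * (m : ℝ) ^ n
        + ∑ ℓ ∈ Finset.range n,
            (m : ℝ) ^ (n - ℓ) * (3 * c * (d : ℝ) ^ c * K + C (ℓ : ℤ) m + C ((ℓ : ℤ) - 1) m)) :
    ∀ n m : ℕ, 1 ≤ n → 1 ≤ m →
      C (n : ℤ) m ≤ 3 * c * (d : ℝ) ^ c * K * (3 * (m : ℝ)) ^ n := by
  intro n m hn hm
  set A : ℝ := 3 * c * (d : ℝ) ^ c * K with hAdef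
  have hA : 0 ≤ A := by
    have h1 : (0:ℝ) ≤ (d:ℝ) ^ c := Real.rpow_nonneg (Nat.cast_nonneg d) c
    have : (0:ℝ) ≤ c := by linarith
    positivity
  have hm1 : (1:ℝ) ≤ (m : ℝ) := by exact_mod_cast hm
  suffices H : ∀ n : ℕ, C (n : ℤ) m ≤ A * (3 * (m:ℝ)) ^ n from H n
  intro n
  induction n using Nat.strong_induction_on with
  | _ n IH =>
    rcases Nat.eq_zero_or_pos n with rfl | hn' 
    · rw [Nat.cast_zero, hzero 0 le_rfl]
      simpa using hA
    · have hrecn := hrec n m hn' hm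
      have hterm : ∀ ℓ ∈ range n,
          (m : ℝ) ^ (n - ℓ) * (3 * c * (d : ℝ) ^ c * K + C (ℓ : ℤ) m + C ((ℓ : ℤ) - 1) m)
            ≤ A * (m:ℝ) ^ n * (1 + (3:ℝ)^ℓ + (3:ℝ)^ℓ / 3) := by
        intro ℓ hℓ
        have hℓn : ℓ < n := mem_range.mp hℓ
        have h1 : C (ℓ : ℤ) m ≤ A * (3 * (m:ℝ)) ^ ℓ := IH ℓ hℓn
        have h2 : C ((ℓ : ℤ) - 1) m ≤ A * (3 * (m:ℝ)) ^ ℓ / 3 := by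
          cases ℓ with
          | zero => rw [hzero _ (by norm_num)]; positivity
          | succ k =>
            have he : ((k+1 : ℕ) : ℤ) - 1 = (k : ℤ) := by push_cast; ring
            rw [he]
            have hk := IH k (by omega)
            have hpk : (0:ℝ) ≤ (3 * (m:ℝ)) ^ k := by positivity
            calc C (k : ℤ) m ≤ A * (3 * (m:ℝ)) ^ k := hk
              _ ≤ A * (3 * (m:ℝ)) ^ (k+1) / 3 := by
                  rw [pow_succ]
                  nlinarith [mul_nonneg hA hpk]
        have hPnn : (0:ℝ) ≤ (m:ℝ) ^ (n - ℓ) := by positivity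
        have hP : (m:ℝ) ^ (n - ℓ) * (m:ℝ) ^ ℓ = (m:ℝ) ^ n := by
          rw [← pow_add, Nat.sub_add_cancel hℓn.le]
        have hPle : (m:ℝ) ^ (n - ℓ) ≤ (m:ℝ) ^ n :=
          pow_le_pow_right₀ hm1 (Nat.sub_le n ℓ)
        have h3nn : (0:ℝ) ≤ (3:ℝ)^ℓ := by positivity
        calc (m : ℝ) ^ (n - ℓ) * (3 * c * (d : ℝ) ^ c * K + C (ℓ : ℤ) m + C ((ℓ : ℤ) - 1) m)
            ≤ (m : ℝ) ^ (n - ℓ) * (A + A * (3 * (m:ℝ)) ^ ℓ + A * (3 * (m:ℝ)) ^ ℓ / 3) := by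
              apply mul_le_mul_of_nonneg_left _ hPnn
              rw [hAdef] at h1 h2 ⊢
              linarith
          _ = A * (m:ℝ)^(n-ℓ) + A * (3:ℝ)^ℓ * ((m:ℝ)^(n-ℓ) * (m:ℝ)^ℓ)
                + A * (3:ℝ)^ℓ * ((m:ℝ)^(n-ℓ) * (m:ℝ)^ℓ) / 3 := by
              rw [mul_pow]; ring
          _ ≤ A * (m:ℝ)^n + A * (3:ℝ)^ℓ * (m:ℝ)^n + A * (3:ℝ)^ℓ * (m:ℝ)^n / 3 := by
              rw [hP]
              have := mul_le_mul_of_nonneg_left hPle hA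
              linarith
          _ = A * (m:ℝ) ^ n * (1 + (3:ℝ)^ℓ + (3:ℝ)^ℓ / 3) := by ring
      have hsum := Finset.sum_le_sum hterm
      have hgeom : ∑ ℓ ∈ range n, (3:ℝ)^ℓ = ((3:ℝ)^n - 1)/2 := by
        rw [geom_sum_eq (by norm_num : (3:ℝ) ≠ 1) n]; norm_num
      have hsum2 : ∑ ℓ ∈ range n, A * (m:ℝ) ^ n * (1 + (3:ℝ)^ℓ + (3:ℝ)^ℓ / 3)
          = A * (m:ℝ)^n * ((n:ℝ) + ((3:ℝ)^n - 1)/2 + (((3:ℝ)^n - 1)/2)/3) := by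
        rw [← Finset.mul_sum]
        congr 1
        rw [Finset.sum_add_distrib, Finset.sum_add_distrib, ← Finset.sum_div, hgeom,
          Finset.sum_const, card_range]
        simp
      rw [hsum2] at hsum
      have h3n : (3:ℝ) * n ≤ (3:ℝ)^n := by exact_mod_cast stmt_12_aux n hn'
      have hmn : (0:ℝ) ≤ (m:ℝ)^n := by positivity
      have hkey : 0 ≤ A * (m:ℝ)^n * ((3:ℝ)^n - 3 * n) :=
        mul_nonneg (mul_nonneg hA hmn) (by linarith)
      have h2A : 2 * c * (d : ℝ) ^ c * K * (m:ℝ)^n = (2/3) * (A * (m:ℝ)^n) := by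
        rw [hAdef]; ring
      rw [h2A] at hrecn
      have : A * (3 * (m:ℝ)) ^ n = A * (3:ℝ)^n * (m:ℝ)^n := by rw [mul_pow]; ring
      rw [this]
      nlinarith [hrecn, hsum, hkey]
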